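/- arXiv:2004.05167 — 3 statements merged into one kernel-verified Lean document; each statement's English description precedes it below -/
import Mathlib

section
/- Let V be a finite set, k ≥ 2 an integer, and w : V → ℝ with 0 ≤ w(x) < 1 for all x ∈ V. Then (k−1) · Σ_{S ⊆ V, |S| = k−1} P^V[S] = Σ_{S' ⊆ V, |S'| = k−2} P^V[S'] · Σ_{x ∈ V∖S'} (w(x)/(1 − w(x))). -/
/-!
Multiplying `P^V[S']` by `w(x) / (1 - w(x))` for `x ∉ S'` moves `x` from the complement into
the set, giving `P^V[S' ∪ {x}]`. So the right-hand side sums `P^V[S]` over all pairs `(S', x)`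
with `S = S' ∪ {x}`, and each `S` of size `k - 1` arises from exactly `k - 1` such pairs.
-/

open Finset

/-- `Pw w V S = (∏_{x∈S} w(x)) · (∏_{x∈V∖S} (1 − w(x)))`. -/
def Pw {α : Type*} [DecidableEq α] (w : α → ℝ) (V S : Finset α) : ℝ :=
  (∏ x ∈ S, w x) * (∏ x ∈ V \ S, (1 - w x))

theorem Finset.sum_powersetCard_succ_nsmul {β M : Type*} [DecidableEq β] [AddCommMonoid M]
    (V : Finset β) (n : ℕ) (f : Finset β → M) :
    ∑ S ∈ V.powersetCard (n + 1), (n + 1) • f S =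
      ∑ T ∈ V.powersetCard n, ∑ x ∈ V \ T, f (insert x T) := by
  have hcard : ∀ S ∈ V.powersetCard (n + 1), (n + 1) • f S = ∑ _x ∈ S, f S := by
    intro S hS
    rw [sum_const, (mem_powersetCard.mp hS).2]
  rw [sum_congr rfl hcard, sum_sigma', sum_sigma']
  refine sum_nbij' (fun p => ⟨p.1.erase p.2, p.2⟩) (fun p => ⟨insert p.2 p.1, p.2⟩)
    ?_ ?_ ?_ ?_ ?_
  · rintro ⟨S, x⟩ hp
    simp only [mem_sigma, mem_powersetCard] at hp ⊢
    obtain ⟨⟨hSV, hScard⟩, hxS⟩ := hp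
    exact ⟨⟨(erase_subset x S).trans hSV, by rw [card_erase_of_mem hxS, hScard]; rfl⟩,
      mem_sdiff.mpr ⟨hSV hxS, notMem_erase x S⟩⟩
  · rintro ⟨T, x⟩ hp
    simp only [mem_sigma, mem_powersetCard, mem_sdiff] at hp ⊢
    obtain ⟨⟨hTV, hTcard⟩, hxV, hxT⟩ := hp
    exact ⟨⟨insert_subset hxV hTV, by rw [card_insert_of_notMem hxT, hTcard]⟩,
      mem_insert_self x T⟩
  · rintro ⟨S, x⟩ hp
    simp only [mem_sigma] at hp
    simp [insert_erase hp.2]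
  · rintro ⟨T, x⟩ hp
    simp only [mem_sigma, mem_sdiff] at hp
    simp [erase_insert hp.2.2]
  · rintro ⟨S, x⟩ hp
    simp only [mem_sigma] at hp
    simp [insert_erase hp.2]

theorem Pw_insert {α : Type*} [DecidableEq α] (w : α → ℝ) {V S : Finset α} {x : α}
    (hxV : x ∈ V) (hxS : x ∉ S) (hw : w x ≠ 1) :
    Pw w V (insert x S) = Pw w V S * (w x / (1 - w x)) := by
  have hsub : 1 - w x ≠ 0 := sub_ne_zero.mpr hw.symm
  have hcompl : V \ insert x S = (V \ S).erase x := by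
    ext y
    simp only [mem_sdiff, mem_insert, mem_erase, not_or]
    tauto
  unfold Pw
  rw [prod_insert hxS, hcompl, ← mul_prod_erase (V \ S) _ (mem_sdiff.mpr ⟨hxV, hxS⟩)]
  field_simp

/-- for a finite set `V`, `k ≥ 2`, and weights `0 ≤ w(x) < 1`,
`(k−1) · Σ_{S ⊆ V, |S| = k−1} P^V[S]
  = Σ_{S' ⊆ V, |S'| = k−2} P^V[S'] · Σ_{x ∈ V∖S'} w(x)/(1 − w(x))`. -/
theorem stmt11 {α : Type*} [Fintype α] [DecidableEq α] (w : α → ℝ)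
    (hw : ∀ x, 0 ≤ w x ∧ w x < 1) (k : ℕ) (hk : 2 ≤ k) :
    ((k : ℝ) - 1) *
        ∑ S ∈ (univ : Finset α).powerset.filter (fun S => S.card = k - 1), Pw w univ S
      = ∑ S' ∈ (univ : Finset α).powerset.filter (fun S' => S'.card = k - 2),
          Pw w univ S' * ∑ x ∈ (univ : Finset α) \ S', (w x / (1 - w x)) := by
  obtain ⟨n, rfl⟩ : ∃ n, k = n + 2 := ⟨k - 2, by omega⟩
  simp only [← powersetCard_eq_filter, Nat.add_sub_cancel, show n + 2 - 1 = n + 1 by omega]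
  calc ((↑(n + 2) : ℝ) - 1) * ∑ S ∈ powersetCard (n + 1) univ, Pw w univ S
      = ∑ S ∈ powersetCard (n + 1) univ, (n + 1) • Pw w univ S := by
        rw [← smul_sum, nsmul_eq_mul]
        push_cast
        ring
    _ = ∑ T ∈ powersetCard n univ, ∑ x ∈ univ \ T, Pw w univ (insert x T) :=
        sum_powersetCard_succ_nsmul _ _ _
    _ = _ := by
        refine sum_congr rfl fun T _ => ?_
        rw [mul_sum]
        exact sum_congr rfl fun x hx => Pw_insert w (mem_univ x) (mem_sdiff.mp hx).2 (hw x).2.ne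
end

section
/- Let V be a finite set, k ≥ 2 an integer, and w : V → ℝ with 0 ≤ w(x) ≤ 1 for all x ∈ V and Σ_{x∈V} w(x) ≥ 3k/2 − 2. Then Σ_{S ⊆ V, |S| = k−1} P^V[S] ≥ (k/(2(k−1))) · Σ_{S ⊆ V, |S| = k−2} P^V[S]. -/
/-!
Double count the pairs `(S, x)` with `|S| = k - 2` and `x ∉ S`, weighted by `P[S] w(x)`.
Since `P[S] w(x) = P[S ∪ {x}] (1 - w(x))`, this is also the count of pairs `(T, x)` with
`|T| = k - 1` and `x ∈ T`, weighted by `P[T] (1 - w(x))`. For fixed `S` the weights `w(x)`,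
`x ∉ S`, sum to at least `Σ w - (k - 2) ≥ k/2`, and for fixed `T` the weights `1 - w(x)`, `x ∈ T`,
sum to at most `k - 1`.
-/

open Finset

section

variable {α : Type*} [DecidableEq α]

lemma Pw_nonneg {w : α → ℝ} {V : Finset α} (h0 : ∀ x ∈ V, 0 ≤ w x) (h1 : ∀ x ∈ V, w x ≤ 1)
    {S : Finset α} (hS : S ⊆ V) : 0 ≤ Pw w V S :=
  mul_nonneg (prod_nonneg fun x hx => h0 x (hS hx))
    (prod_nonneg fun x hx => sub_nonneg.2 (h1 x (mem_sdiff.1 hx).1))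

lemma Pw_mul_eq_Pw_insert_mul (w : α → ℝ) {V S : Finset α} {x : α} (hx : x ∈ V \ S) :
    Pw w V S * w x = Pw w V (insert x S) * (1 - w x) := by
  unfold Pw
  rw [prod_insert (mem_sdiff.1 hx).2, sdiff_insert, ← mul_prod_erase _ _ hx]
  ring

lemma sum_powersetCard_sum_sdiff_insert {β : Type*} [AddCommMonoid β] (f : Finset α → α → β)
    (V : Finset α) (j : ℕ) :
    ∑ S ∈ V.powersetCard j, ∑ x ∈ V \ S, f (insert x S) x
      = ∑ T ∈ V.powersetCard (j + 1), ∑ x ∈ T, f T x := by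
  rw [sum_sigma', sum_sigma']
  refine sum_nbij' (fun p => ⟨insert p.2 p.1, p.2⟩) (fun p => ⟨p.1.erase p.2, p.2⟩) ?_ ?_ ?_ ?_ ?_
  · rintro ⟨S, x⟩ hp
    simp only [mem_sigma, mem_powersetCard, mem_sdiff] at hp ⊢
    obtain ⟨⟨hSV, hS⟩, hxV, hxS⟩ := hp
    exact ⟨⟨insert_subset hxV hSV, by rw [card_insert_of_notMem hxS, hS]⟩, mem_insert_self _ _⟩
  · rintro ⟨T, x⟩ hp
    simp only [mem_sigma, mem_powersetCard, mem_sdiff] at hp ⊢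
    obtain ⟨⟨hTV, hT⟩, hxT⟩ := hp
    exact ⟨⟨(erase_subset _ _).trans hTV, by rw [card_erase_of_mem hxT, hT, Nat.add_sub_cancel]⟩,
      hTV hxT, notMem_erase _ _⟩
  · rintro ⟨S, x⟩ hp
    simp only [mem_sigma, mem_sdiff] at hp
    simp [erase_insert hp.2.2]
  · rintro ⟨T, x⟩ hp
    simp only [mem_sigma] at hp
    simp [insert_erase hp.2]
  · intro p _
    rfl

lemma sub_mul_sum_Pw_powersetCard_le {w : α → ℝ} {V : Finset α} (h0 : ∀ x ∈ V, 0 ≤ w x)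
    (h1 : ∀ x ∈ V, w x ≤ 1) (j : ℕ) :
    (∑ x ∈ V, w x - j) * ∑ S ∈ V.powersetCard j, Pw w V S
      ≤ (j + 1) * ∑ T ∈ V.powersetCard (j + 1), Pw w V T := by
  have weight_outside : ∀ S ∈ V.powersetCard j,
      (∑ x ∈ V, w x - j) * Pw w V S ≤ ∑ x ∈ V \ S, Pw w V S * w x := by
    intro S hS
    obtain ⟨hSV, hcard⟩ := mem_powersetCard.1 hS
    have hin : ∑ x ∈ S, w x ≤ j := by
      simpa [hcard] using sum_le_sum fun x hx => h1 x (hSV hx)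
    rw [← mul_sum, mul_comm, sum_sdiff_eq_sub hSV]
    exact mul_le_mul_of_nonneg_left (by linarith) (Pw_nonneg h0 h1 hSV)
  have weight_inside : ∀ T ∈ V.powersetCard (j + 1),
      ∑ x ∈ T, Pw w V T * (1 - w x) ≤ (j + 1) * Pw w V T := by
    intro T hT
    obtain ⟨hTV, hcard⟩ := mem_powersetCard.1 hT
    calc ∑ x ∈ T, Pw w V T * (1 - w x) ≤ ∑ _x ∈ T, Pw w V T :=
          sum_le_sum fun x hx =>
            mul_le_of_le_one_right (Pw_nonneg h0 h1 hTV) (by linarith [h0 x (hTV hx)])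
      _ = (j + 1) * Pw w V T := by simp [hcard]
  calc (∑ x ∈ V, w x - j) * ∑ S ∈ V.powersetCard j, Pw w V S
      ≤ ∑ S ∈ V.powersetCard j, ∑ x ∈ V \ S, Pw w V S * w x := by
        rw [mul_sum]; exact sum_le_sum weight_outside
    _ = ∑ S ∈ V.powersetCard j, ∑ x ∈ V \ S, Pw w V (insert x S) * (1 - w x) :=
        sum_congr rfl fun S _ => sum_congr rfl fun x hx => Pw_mul_eq_Pw_insert_mul w hx
    _ = ∑ T ∈ V.powersetCard (j + 1), ∑ x ∈ T, Pw w V T * (1 - w x) :=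
        sum_powersetCard_sum_sdiff_insert (fun T x => Pw w V T * (1 - w x)) V j
    _ ≤ (j + 1) * ∑ T ∈ V.powersetCard (j + 1), Pw w V T := by
        rw [mul_sum]; exact sum_le_sum weight_inside

end

/-- for a finite set `V`, `k ≥ 2`, weights in `[0,1]` with
`Σ_{x∈V} w(x) ≥ 3k/2 − 2`,
`Σ_{S ⊆ V, |S| = k−1} P^V[S] ≥ (k/(2(k−1))) · Σ_{S ⊆ V, |S| = k−2} P^V[S]`. -/
theorem stmt12 {α : Type*} [Fintype α] [DecidableEq α] (w : α → ℝ)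
    (hw : ∀ x, 0 ≤ w x ∧ w x ≤ 1) (k : ℕ) (hk : 2 ≤ k)
    (hsum : 3 * (k : ℝ) / 2 - 2 ≤ ∑ x, w x) :
    ((k : ℝ) / (2 * ((k : ℝ) - 1))) *
        ∑ S ∈ (univ : Finset α).powerset.filter (fun S => S.card = k - 2), Pw w univ S
      ≤ ∑ S ∈ (univ : Finset α).powerset.filter (fun S => S.card = k - 1), Pw w univ S := by
  obtain ⟨j, rfl⟩ := Nat.exists_eq_add_of_le hk
  simp only [← powersetCard_eq_filter, Nat.add_sub_cancel_left,
    show 2 + j - 1 = j + 1 by omega]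
  have h0 : ∀ x ∈ (univ : Finset α), 0 ≤ w x := fun x _ => (hw x).1
  have h1 : ∀ x ∈ (univ : Finset α), w x ≤ 1 := fun x _ => (hw x).2
  have hY : 0 ≤ ∑ S ∈ univ.powersetCard j, Pw w univ S :=
    sum_nonneg fun S hS => Pw_nonneg h0 h1 (mem_powersetCard.1 hS).1
  push_cast at hsum ⊢
  have key : (2 + j : ℝ) / 2 * ∑ S ∈ univ.powersetCard j, Pw w univ S
      ≤ (j + 1) * ∑ T ∈ univ.powersetCard (j + 1), Pw w univ T :=
    (mul_le_mul_of_nonneg_right (by linarith) hY).trans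
      (sub_mul_sum_Pw_powersetCard_le h0 h1 j)
  rw [div_mul_eq_mul_div, div_le_iff₀ (by linarith [(j.cast_nonneg : (0 : ℝ) ≤ j)])]
  linarith
end

section
/- Let V be a finite set, k ≥ 2 an integer, and w : V → ℝ with 0 ≤ w(x) ≤ 1 for all x ∈ V and 3k/2 − 2 ≤ Σ_{x∈V} w(x) ≤ 3k/2. Then Σ_{S ⊆ V, |S| ≥ k−1} P^V[S] · (k/(|S|+1)) ≥ (1/2) · (1 − e^{−k/36} − e^{−k/54}). -/
/-!
Under `P^V`, `|S|` is a sum of independent Bernoulli(`w x`) variables with mean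
`μ = Σ w ∈ [3k/2 - 2, 3k/2]`. Chernoff bounds with the exponential moments `e^{±|S|/3}` give
`P(|S| ≥ 2k) ≤ e^{-k/36}` and `P(|S| ≤ k - 2) ≤ e^{-k/54}`, and on the remaining event
`k - 1 ≤ |S| < 2k` the weight `k / (|S| + 1)` is at least `1/2`.
-/

open Finset

lemma prod_mul_add_one_sub_le_exp {α : Type*} {w : α → ℝ} {V : Finset α}
    (hw : ∀ x ∈ V, 0 ≤ w x ∧ w x ≤ 1) {r : ℝ} (hr : 0 ≤ r) :
    ∏ x ∈ V, (w x * r + (1 - w x)) ≤ Real.exp ((r - 1) * ∑ x ∈ V, w x) := by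
  rw [mul_sum, Real.exp_sum]
  refine prod_le_prod (fun x hx => ?_) fun x _ => ?_
  · nlinarith [hw x hx]
  · linarith [Real.add_one_le_exp ((r - 1) * w x)]

lemma Real.exp_one_third_le : Real.exp (1 / 3) ≤ 77 / 54 :=
  (Real.exp_bound' (by norm_num) (by norm_num) (n := 3) (by norm_num)).trans
    (by norm_num [Finset.sum_range_succ, Nat.factorial])

lemma Real.exp_neg_one_third_le : Real.exp (-(1 / 3)) ≤ 3 / 4 := by
  rw [Real.exp_neg, inv_le_comm₀ (Real.exp_pos _) (by norm_num)]
  linarith [Real.add_one_le_exp (1 / 3 : ℝ)]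

namespace Pw

variable {α : Type*} [DecidableEq α] {w : α → ℝ} {V : Finset α}

lemma nonneg (hw : ∀ x ∈ V, 0 ≤ w x ∧ w x ≤ 1) {S : Finset α} (hS : S ∈ V.powerset) :
    0 ≤ Pw w V S :=
  mul_nonneg (prod_nonneg fun x hx => (hw x (mem_powerset.1 hS hx)).1)
    (prod_nonneg fun x hx => sub_nonneg.2 (hw x (mem_sdiff.1 hx).1).2)

lemma sum_mul_pow_card (w : α → ℝ) (V : Finset α) (r : ℝ) :
    ∑ S ∈ V.powerset, Pw w V S * r ^ S.card = ∏ x ∈ V, (w x * r + (1 - w x)) := by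
  rw [prod_add]
  refine sum_congr rfl fun S _ => ?_
  rw [Pw, prod_mul_distrib, prod_const]
  ring

lemma sum_eq_one (w : α → ℝ) (V : Finset α) : ∑ S ∈ V.powerset, Pw w V S = 1 := by
  simpa using sum_mul_pow_card w V 1

/-- Markov's inequality for `exp (t * |S|)`. -/
lemma sum_filter_le_exp (hw : ∀ x ∈ V, 0 ≤ w x ∧ w x ≤ 1) (p : Finset α → Prop)
    [DecidablePred p] (t m : ℝ) (hp : ∀ S ∈ V.powerset, p S → t * m ≤ t * S.card) :
    ∑ S ∈ V.powerset.filter p, Pw w V S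
      ≤ Real.exp ((Real.exp t - 1) * ∑ x ∈ V, w x - t * m) := by
  calc ∑ S ∈ V.powerset.filter p, Pw w V S
      ≤ ∑ S ∈ V.powerset.filter p,
          Pw w V S * (Real.exp (-(t * m)) * Real.exp t ^ S.card) := by
        refine sum_le_sum fun S hS => ?_
        obtain ⟨hSV, hpS⟩ := mem_filter.1 hS
        rw [← Real.exp_nat_mul, ← Real.exp_add]
        refine le_mul_of_one_le_right (nonneg hw hSV) (Real.one_le_exp ?_)
        linarith [hp S hSV hpS]
    _ ≤ ∑ S ∈ V.powerset, Pw w V S * (Real.exp (-(t * m)) * Real.exp t ^ S.card) :=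
        sum_le_sum_of_subset_of_nonneg (filter_subset _ _)
          fun S hS _ => mul_nonneg (nonneg hw hS) (by positivity)
    _ = Real.exp (-(t * m)) * ∏ x ∈ V, (w x * Real.exp t + (1 - w x)) := by
        simp only [mul_left_comm _ (Real.exp _), ← mul_sum, sum_mul_pow_card]
    _ ≤ Real.exp (-(t * m)) * Real.exp ((Real.exp t - 1) * ∑ x ∈ V, w x) :=
        mul_le_mul_of_nonneg_left (prod_mul_add_one_sub_le_exp hw (Real.exp_pos t).le)
          (Real.exp_pos _).le
    _ = _ := by rw [← Real.exp_add]; ring_nf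

lemma sum_filter_two_mul_le_card_le (hw : ∀ x ∈ V, 0 ≤ w x ∧ w x ≤ 1) (k : ℕ)
    (hμ : ∑ x ∈ V, w x ≤ 3 * (k : ℝ) / 2) :
    ∑ S ∈ V.powerset.filter (fun S => 2 * k ≤ S.card), Pw w V S
      ≤ Real.exp (-(k : ℝ) / 36) := by
  refine (sum_filter_le_exp hw _ (1 / 3) (2 * k) fun S _ hS => ?_).trans (Real.exp_le_exp.2 ?_)
  · have : (2 * k : ℝ) ≤ S.card := by exact_mod_cast hS
    linarith
  · have hμ0 : 0 ≤ ∑ x ∈ V, w x := sum_nonneg fun x hx => (hw x hx).1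
    nlinarith [Real.exp_one_third_le, Real.add_one_le_exp (1 / 3 : ℝ)]

lemma sum_filter_card_lt_le (hw : ∀ x ∈ V, 0 ≤ w x ∧ w x ≤ 1) (k : ℕ)
    (hμ : 3 * (k : ℝ) / 2 - 2 ≤ ∑ x ∈ V, w x) :
    ∑ S ∈ V.powerset.filter (fun S => ¬ k - 1 ≤ S.card), Pw w V S
      ≤ Real.exp (-(k : ℝ) / 54) := by
  refine (sum_filter_le_exp hw _ (-(1 / 3)) (k - 2) fun S _ hS => ?_).trans (Real.exp_le_exp.2 ?_)
  · have : (S.card + 2 : ℝ) ≤ k := by exact_mod_cast (by omega : S.card + 2 ≤ k)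
    linarith
  · have hμ0 : 0 ≤ ∑ x ∈ V, w x := sum_nonneg fun x hx => (hw x hx).1
    nlinarith [Real.exp_neg_one_third_le]

end Pw

/-- For `k - 1 ≤ c < 2k` the weight `k / (c + 1)` is at least `1/2`; any other `c` is in a tail. -/
lemma le_two_mul_window_add_tails {p : ℝ} (k c : ℕ) (hp : 0 ≤ p) :
    p ≤ 2 * (if k - 1 ≤ c then p * ((k : ℝ) / ((c : ℝ) + 1)) else 0)
      + (if 2 * k ≤ c then p else 0) + (if ¬ k - 1 ≤ c then p else 0) := by
  have hpos : (0 : ℝ) < c + 1 := by positivity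
  split_ifs with h₁ h₂ <;> try omega
  · have : 0 ≤ p * ((k : ℝ) / ((c : ℝ) + 1)) := by positivity
    linarith
  · have hc : (c : ℝ) + 1 ≤ 2 * k := by exact_mod_cast (by omega : c + 1 ≤ 2 * k)
    have : p ≤ 2 * (p * ((k : ℝ) / ((c : ℝ) + 1))) := by
      rw [mul_div_assoc', mul_div_assoc', le_div_iff₀ hpos]
      nlinarith
    linarith
  · linarith

theorem stmt15_general {α : Type*} [Fintype α] [DecidableEq α] (w : α → ℝ)
    (hw : ∀ x, 0 ≤ w x ∧ w x ≤ 1) (k : ℕ)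
    (hsum_lo : 3 * (k : ℝ) / 2 - 2 ≤ ∑ x, w x)
    (hsum_hi : ∑ x, w x ≤ 3 * (k : ℝ) / 2) :
    (1/2) * (1 - Real.exp (-(k : ℝ) / 36) - Real.exp (-(k : ℝ) / 54))
      ≤ ∑ S ∈ (univ : Finset α).powerset.filter (fun S => k - 1 ≤ S.card),
          Pw w univ S * ((k : ℝ) / ((S.card : ℝ) + 1)) := by
  have hw' : ∀ x ∈ univ, 0 ≤ w x ∧ w x ≤ 1 := fun x _ => hw x
  have hupper := Pw.sum_filter_two_mul_le_card_le hw' k hsum_hi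
  have hlower := Pw.sum_filter_card_lt_le hw' k hsum_lo
  have htotal := (Pw.sum_eq_one w univ).symm.le.trans (sum_le_sum fun S hS =>
    le_two_mul_window_add_tails k S.card (Pw.nonneg hw' hS))
  simp only [sum_add_distrib, ← mul_sum, ← sum_filter] at htotal
  linarith

/-- for `k ≥ 2` and weights in `[0,1]` with
`3k/2 − 2 ≤ Σ_{x∈V} w(x) ≤ 3k/2`,
`Σ_{S ⊆ V, |S| ≥ k−1} P^V[S]·(k/(|S|+1)) ≥ (1/2)·(1 − e^{−k/36} − e^{−k/54})`. -/
theorem stmt15 {α : Type*} [Fintype α] [DecidableEq α] (w : α → ℝ)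
    (hw : ∀ x, 0 ≤ w x ∧ w x ≤ 1) (k : ℕ) (hk : 2 ≤ k)
    (hsum_lo : 3 * (k : ℝ) / 2 - 2 ≤ ∑ x, w x)
    (hsum_hi : ∑ x, w x ≤ 3 * (k : ℝ) / 2) :
    (1/2) * (1 - Real.exp (-(k : ℝ) / 36) - Real.exp (-(k : ℝ) / 54))
      ≤ ∑ S ∈ (univ : Finset α).powerset.filter (fun S => k - 1 ≤ S.card),
          Pw w univ S * ((k : ℝ) / ((S.card : ℝ) + 1)) :=
  stmt15_general w hw k hsum_lo hsum_hi
end
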